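/- The function Φ is holomorphic on Ω and has a critical point at (z₁,z₂) = (1/2, 1/4): both complex partial derivatives satisfy ∂Φ/∂z₁(1/2,1/4) = 0 and ∂Φ/∂z₂(1/2,1/4) = 0. -/

import Mathlib

open Real

/-- The dilogarithm `Li₂(z) = -∫₀¹ log(1 - t z)/t dt` (principal branch of `log`). -/
noncomputable def Li2 (z : ℂ) : ℂ :=
  -∫ t in (0:ℝ)..1, Complex.log (1 - (t:ℂ) * z) / (t:ℂ)

/-- The potential function of the Whitehead link (at `s₁ = s₂ = 1`). -/
noncomputable def Phi0 (z₁ z₂ : ℂ) : ℂ :=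
  (1 / (2 * (π:ℂ) * Complex.I)) *
    (Li2 (Complex.exp (-(2 * (π:ℂ) * Complex.I) * (z₁ + z₂)))
     - Li2 (Complex.exp (-(2 * (π:ℂ) * Complex.I) * z₂))
     + Li2 (Complex.exp (2 * (π:ℂ) * Complex.I * z₂))
     - Li2 (Complex.exp (2 * (π:ℂ) * Complex.I * (z₁ + z₂)))
     + Li2 (Complex.exp (2 * (π:ℂ) * Complex.I * z₁)))

/-- The domain `Ω = {(z₁,z₂) : 0 < Re z₁ < 1, 0 < Re z₂ < 1, 0 < Re (z₁+z₂) < 1}`. -/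
def OmegaSet : Set (ℂ × ℂ) :=
  {p | 0 < p.1.re ∧ p.1.re < 1 ∧ 0 < p.2.re ∧ p.2.re < 1 ∧
       0 < (p.1 + p.2).re ∧ (p.1 + p.2).re < 1}

/-!
Differentiation under the integral sign, with the `x`-derivative `-(1 - t x)⁻¹` of the integrand
bounded uniformly on `[0, 1] × closedBall z ε` for a ball avoiding the cut `[1, ∞)`, gives
`Li₂'(z) = -log (1 - z) / z`, hence `d/dw Li₂ (exp (c w)) = -c log (1 - exp (c w))`.
For `0 < Re ζ < 1` the points `exp (±2πiζ)` avoid the cut, so `Φ` is holomorphic on `Ω` and its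
partial derivatives are sums of terms `log (1 - exp (±2πiζ))`. At `(1/2, 1/4)` the exponentials
are `±i` and `-1`: the terms of `∂Φ/∂z₂` cancel in pairs, and
`∂Φ/∂z₁ = log (1 - i) + log (1 + i) - log 2` vanishes since `log z̄ + log z = log |z|²`.
-/

open Complex Set Filter MeasureTheory intervalIntegral Metric
open scoped ComplexConjugate Interval

lemma one_sub_mul_mem_slitPlane {z : ℂ} (hz : 1 - z ∈ slitPlane) {t : ℝ}
    (ht : t ∈ Icc (0:ℝ) 1) : 1 - t * z ∈ slitPlane := by
  simpa [sub_eq_add_neg, real_smul] using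
    starConvex_one_slitPlane.add_smul_mem (y := -z) (by rwa [← sub_eq_add_neg]) ht.1 ht.2

lemma hasDerivAt_log_one_sub_ofReal_mul {z : ℂ} {s : ℝ} (hs : 1 - s * z ∈ slitPlane) :
    HasDerivAt (fun s : ℝ => log (1 - s * z)) (-z / (1 - s * z)) s := by
  simpa using (((hasDerivAt_id (s:ℂ)).mul_const z).const_sub 1).comp_ofReal.clog_real hs

lemma norm_log_one_sub_mul_le {z : ℂ} (hz : 1 - z ∈ slitPlane) {C : ℝ}
    (hC : ∀ s ∈ Icc (0:ℝ) 1, ‖(1 - s * z)⁻¹‖ ≤ C) {t : ℝ} (ht : t ∈ Icc (0:ℝ) 1) :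
    ‖log (1 - t * z)‖ ≤ C * ‖z‖ * t := by
  have hderiv : ∀ s ∈ Icc (0:ℝ) 1, HasDerivWithinAt (fun s : ℝ => log (1 - s * z))
      (-z / (1 - s * z)) (Icc 0 1) s := fun s hs =>
    (hasDerivAt_log_one_sub_ofReal_mul (one_sub_mul_mem_slitPlane hz hs)).hasDerivWithinAt
  have hbound : ∀ s ∈ Icc (0:ℝ) 1, ‖-z / (1 - s * z)‖ ≤ C * ‖z‖ := fun s hs => by
    rw [div_eq_mul_inv, norm_mul, norm_neg, mul_comm]
    exact mul_le_mul_of_nonneg_right (hC s hs) (norm_nonneg z)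
  simpa [abs_of_nonneg ht.1] using (convex_Icc (0:ℝ) 1).norm_image_sub_le_of_norm_hasDerivWithin_le
    hderiv hbound (left_mem_Icc.2 zero_le_one) ht

lemma integral_inv_one_sub_mul {z : ℂ} (hz : 1 - z ∈ slitPlane) (h0 : z ≠ 0) :
    ∫ t in (0:ℝ)..1, (1 - t * z)⁻¹ = -(log (1 - z) / z) := by
  have h := log_inv_eq_integral hz
  simp only [real_smul] at h
  rw [log_inv _ (slitPlane_arg_ne_pi hz)] at h
  rw [← neg_div, eq_div_iff h0, h, mul_comm]

lemma intervalIntegrable_log_one_sub_mul_div {z : ℂ} (hz : 1 - z ∈ slitPlane) :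
    IntervalIntegrable (fun t : ℝ => log (1 - t * z) / t) volume 0 1 := by
  obtain ⟨C, hC⟩ := isCompact_Icc.exists_bound_of_continuousOn (f := fun s : ℝ => (1 - s * z)⁻¹)
    (ContinuousOn.inv₀ (by fun_prop) fun s hs =>
      slitPlane_ne_zero (one_sub_mul_mem_slitPlane hz hs))
  refine (intervalIntegrable_const (c := C * ‖z‖)).mono_fun'
    (Measurable.aestronglyMeasurable (by fun_prop)) ?_
  rw [EventuallyLE, ae_restrict_iff' measurableSet_uIoc, uIoc_of_le zero_le_one]
  refine ae_of_all _ fun t ht => ?_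
  rw [norm_div, norm_real, Real.norm_of_nonneg ht.1.le, div_le_iff₀ ht.1]
  exact norm_log_one_sub_mul_le hz hC (Ioc_subset_Icc_self ht)

lemma hasDerivAt_log_one_sub_mul_div {t : ℝ} (ht : t ≠ 0) {x : ℂ} (hx : 1 - t * x ∈ slitPlane) :
    HasDerivAt (fun x => log (1 - (t:ℂ) * x) / t) (-(1 - (t:ℂ) * x)⁻¹) x := by
  refine (((((hasDerivAt_id' x).const_mul (t:ℂ)).const_sub 1).clog hx).div_const
    (t:ℂ)).congr_deriv ?_
  field_simp [ofReal_ne_zero.2 ht]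

theorem hasDerivAt_Li2 {z : ℂ} (hz : 1 - z ∈ slitPlane) (h0 : z ≠ 0) :
    HasDerivAt Li2 (-(log (1 - z) / z)) z := by
  obtain ⟨ε, hε, hball⟩ : ∃ ε > 0, closedBall z ε ⊆ {x | 1 - x ∈ slitPlane} :=
    nhds_basis_closedBall.mem_iff.1 ((isOpen_slitPlane.preimage (by fun_prop)).mem_nhds hz)
  have hIoc : Ι (0:ℝ) 1 = Ioc 0 1 := uIoc_of_le zero_le_one
  have hK : ∀ t ∈ Ι (0:ℝ) 1, ∀ x ∈ ball z ε, (t, x) ∈ Icc (0:ℝ) 1 ×ˢ closedBall z ε :=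
    fun t ht x hx => ⟨Ioc_subset_Icc_self (by rwa [hIoc] at ht), ball_subset_closedBall hx⟩
  have hslit : ∀ p ∈ Icc (0:ℝ) 1 ×ˢ closedBall z ε, 1 - p.1 * p.2 ∈ slitPlane :=
    fun p hp => one_sub_mul_mem_slitPlane (hball hp.2) hp.1
  obtain ⟨C, hC⟩ := (isCompact_Icc.prod (isCompact_closedBall z ε)).exists_bound_of_continuousOn
    (f := fun p : ℝ × ℂ => (1 - p.1 * p.2)⁻¹)
    (ContinuousOn.inv₀ (by fun_prop) fun p hp => slitPlane_ne_zero (hslit p hp))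
  have hbound : ∀ t ∈ Ι (0:ℝ) 1, ∀ x ∈ ball z ε, ‖-(1 - (t:ℂ) * x)⁻¹‖ ≤ C :=
    fun t ht x hx => by simpa using hC _ (hK t ht x hx)
  have hderiv : ∀ t ∈ Ι (0:ℝ) 1, ∀ x ∈ ball z ε,
      HasDerivAt (fun x => log (1 - (t:ℂ) * x) / t) (-(1 - (t:ℂ) * x)⁻¹) x :=
    fun t ht x hx => hasDerivAt_log_one_sub_mul_div
      (by rw [hIoc] at ht; exact ht.1.ne') (hslit _ (hK t ht x hx))
  have key := hasDerivAt_integral_of_dominated_loc_of_deriv_le (ball_mem_nhds z hε)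
    (F := fun x (t : ℝ) => log (1 - (t:ℂ) * x) / t) (F' := fun x (t : ℝ) => -(1 - (t:ℂ) * x)⁻¹)
    (bound := fun _ => C) (Eventually.of_forall fun _ => Measurable.aestronglyMeasurable
      (by fun_prop)) (intervalIntegrable_log_one_sub_mul_div hz)
    (Measurable.aestronglyMeasurable (by fun_prop))
    (ae_of_all _ hbound) intervalIntegrable_const (ae_of_all _ hderiv)
  have hLi2 : HasDerivAt Li2 (-∫ t in (0:ℝ)..1, -(1 - (t:ℂ) * z)⁻¹) z := key.2.neg
  rwa [intervalIntegral.integral_neg, neg_neg, integral_inv_one_sub_mul hz h0] at hLi2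

lemma hasDerivAt_Li2_exp_const_mul {c w : ℂ} (hw : 1 - exp (c * w) ∈ slitPlane) :
    HasDerivAt (fun w => Li2 (exp (c * w))) (-(c * log (1 - exp (c * w)))) w := by
  have h := (hasDerivAt_Li2 hw (exp_ne_zero _)).comp w ((hasDerivAt_id' w).const_mul c).cexp
  refine h.congr_deriv ?_
  field_simp [Complex.exp_ne_zero]

lemma DifferentiableAt.Li2_exp_const_mul {E : Type*} [NormedAddCommGroup E] [NormedSpace ℂ E]
    {f : E → ℂ} {x : E} (c : ℂ) (hf : DifferentiableAt ℂ f x)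
    (h : 1 - Complex.exp (c * f x) ∈ slitPlane) :
    DifferentiableAt ℂ (fun y => Li2 (Complex.exp (c * f y))) x :=
  (hasDerivAt_Li2_exp_const_mul h).differentiableAt.comp x hf

lemma one_sub_exp_mem_slitPlane {w : ℂ} (h₁ : -(2 * π) < w.im) (h₂ : w.im < 2 * π)
    (h₀ : w.im ≠ 0) : 1 - exp w ∈ slitPlane := by
  rw [mem_slitPlane_iff, sub_re, sub_im, one_re, one_im, exp_re, exp_im]
  by_contra! ⟨hre, him⟩
  have hsin : Real.sin w.im = 0 := by simpa [(Real.exp_pos _).ne'] using him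
  rcases Real.sin_eq_zero_iff_cos_eq.1 hsin with hcos | hcos
  · exact h₀ ((Real.cos_eq_one_iff_of_lt_of_lt h₁ h₂).1 hcos)
  · rw [hcos] at hre
    linarith [Real.exp_pos w.re]

lemma one_sub_exp_two_pi_I_mul_mem_slitPlane {ζ : ℂ} (h₀ : 0 < ζ.re) (h₁ : ζ.re < 1) :
    1 - exp (2 * π * I * ζ) ∈ slitPlane := by
  apply one_sub_exp_mem_slitPlane <;> simp <;> nlinarith [Real.pi_pos]

lemma one_sub_exp_neg_two_pi_I_mul_mem_slitPlane {ζ : ℂ} (h₀ : 0 < ζ.re) (h₁ : ζ.re < 1) :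
    1 - exp (-(2 * π * I) * ζ) ∈ slitPlane := by
  apply one_sub_exp_mem_slitPlane <;> simp <;> nlinarith [Real.pi_pos]

theorem differentiableOn_Phi0 :
    DifferentiableOn ℂ (fun p : ℂ × ℂ => Phi0 p.1 p.2) OmegaSet := by
  rintro ⟨z₁, z₂⟩ ⟨h₁, h₁', h₂, h₂', h₁₂, h₁₂'⟩
  have hsum : DifferentiableAt ℂ (fun p : ℂ × ℂ => p.1 + p.2) (z₁, z₂) := by fun_prop
  have T₁ := hsum.Li2_exp_const_mul _ (one_sub_exp_neg_two_pi_I_mul_mem_slitPlane h₁₂ h₁₂')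
  have T₂ := (differentiableAt_snd (p := (z₁, z₂))).Li2_exp_const_mul _
    (one_sub_exp_neg_two_pi_I_mul_mem_slitPlane h₂ h₂')
  have T₃ := (differentiableAt_snd (p := (z₁, z₂))).Li2_exp_const_mul _
    (one_sub_exp_two_pi_I_mul_mem_slitPlane h₂ h₂')
  have T₄ := hsum.Li2_exp_const_mul _ (one_sub_exp_two_pi_I_mul_mem_slitPlane h₁₂ h₁₂')
  have T₅ := (differentiableAt_fst (p := (z₁, z₂))).Li2_exp_const_mul _
    (one_sub_exp_two_pi_I_mul_mem_slitPlane h₁ h₁')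
  exact (((((T₁.sub T₂).add T₃).sub T₄).add T₅).const_mul _).differentiableWithinAt

theorem hasDerivAt_Phi0_fst {z₁ z₂ : ℂ} (h : (z₁, z₂) ∈ OmegaSet) :
    HasDerivAt (fun z => Phi0 z z₂)
      (log (1 - exp (-(2 * π * I) * (z₁ + z₂))) + log (1 - exp (2 * π * I * (z₁ + z₂)))
        - log (1 - exp (2 * π * I * z₁))) z₁ := by
  obtain ⟨h₁, h₁', -, -, h₁₂, h₁₂'⟩ := h
  have T₁ := (hasDerivAt_Li2_exp_const_mul
    (one_sub_exp_neg_two_pi_I_mul_mem_slitPlane h₁₂ h₁₂')).comp_add_const z₁ z₂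
  have T₄ := (hasDerivAt_Li2_exp_const_mul
    (one_sub_exp_two_pi_I_mul_mem_slitPlane h₁₂ h₁₂')).comp_add_const z₁ z₂
  have T₅ := hasDerivAt_Li2_exp_const_mul (one_sub_exp_two_pi_I_mul_mem_slitPlane h₁ h₁')
  refine (((((T₁.sub_const _).add_const _).sub T₄).add T₅).const_mul _).congr_deriv ?_
  field_simp
  ring

theorem hasDerivAt_Phi0_snd {z₁ z₂ : ℂ} (h : (z₁, z₂) ∈ OmegaSet) :
    HasDerivAt (fun z => Phi0 z₁ z)
      (log (1 - exp (-(2 * π * I) * (z₁ + z₂))) - log (1 - exp (-(2 * π * I) * z₂))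
        - log (1 - exp (2 * π * I * z₂)) + log (1 - exp (2 * π * I * (z₁ + z₂)))) z₂ := by
  obtain ⟨-, -, h₂, h₂', h₁₂, h₁₂'⟩ := h
  have T₁ := (hasDerivAt_Li2_exp_const_mul
    (one_sub_exp_neg_two_pi_I_mul_mem_slitPlane h₁₂ h₁₂')).comp_const_add z₁ z₂
  have T₂ := hasDerivAt_Li2_exp_const_mul (one_sub_exp_neg_two_pi_I_mul_mem_slitPlane h₂ h₂')
  have T₃ := hasDerivAt_Li2_exp_const_mul (one_sub_exp_two_pi_I_mul_mem_slitPlane h₂ h₂')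
  have T₄ := (hasDerivAt_Li2_exp_const_mul
    (one_sub_exp_two_pi_I_mul_mem_slitPlane h₁₂ h₁₂')).comp_const_add z₁ z₂
  refine (((((T₁.sub T₂).add T₃).sub T₄).add_const _).const_mul _).congr_deriv ?_
  field_simp
  ring

lemma log_conj_add_log {z : ℂ} (hz : z ∈ slitPlane) :
    log (conj z) + log z = Real.log (normSq z) := by
  rw [log_conj _ (slitPlane_arg_ne_pi hz), add_comm, add_conj, log_re, normSq_eq_norm_sq,
    Real.log_pow]
  push_cast
  ring

lemma exp_two_pi_I_mul_half : exp (2 * π * I * (1 / 2)) = -1 := by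
  rw [show 2 * π * I * (1 / 2) = π * I by ring, exp_pi_mul_I]

lemma exp_two_pi_I_mul_quarter : exp (2 * π * I * (1 / 4)) = I := by
  rw [show 2 * π * I * (1 / 4) = π / 2 * I by ring, exp_pi_div_two_mul_I]

lemma exp_neg_two_pi_I_mul_quarter : exp (-(2 * π * I) * (1 / 4)) = -I := by
  rw [show -(2 * π * I) * (1 / 4) = -π / 2 * I by ring, exp_neg_pi_div_two_mul_I]

lemma exp_two_pi_I_mul_three_quarters : exp (2 * π * I * (1 / 2 + 1 / 4)) = -I := by
  rw [show 2 * π * I * (1 / 2 + 1 / 4) = -π / 2 * I + 2 * π * I by ring, Complex.exp_add,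
    exp_neg_pi_div_two_mul_I, exp_two_pi_mul_I, mul_one]

lemma exp_neg_two_pi_I_mul_three_quarters : exp (-(2 * π * I) * (1 / 2 + 1 / 4)) = I := by
  rw [show -(2 * π * I) * (1 / 2 + 1 / 4) = π / 2 * I - 2 * π * I by ring, Complex.exp_sub,
    exp_pi_div_two_mul_I, exp_two_pi_mul_I, div_one]

theorem stmt_3 :
    DifferentiableOn ℂ (fun p : ℂ × ℂ => Phi0 p.1 p.2) OmegaSet ∧
    deriv (fun z => Phi0 z (1/4)) (1/2) = 0 ∧
    deriv (fun z => Phi0 (1/2) z) (1/4) = 0 := by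
  have hcrit : ((1/2 : ℂ), (1/4 : ℂ)) ∈ OmegaSet := by norm_num [OmegaSet]
  have hlog : log (1 - I) + log (1 + I) = log (2 : ℂ) := by
    have h := log_conj_add_log (z := 1 + I) (by simp [mem_slitPlane_iff])
    rwa [map_add, map_one, conj_I, ← sub_eq_add_neg, show normSq (1 + I) = 2 by
      norm_num [normSq_apply], ofReal_log zero_le_two, ofReal_ofNat] at h
  refine ⟨differentiableOn_Phi0, ?_, ?_⟩
  · rw [(hasDerivAt_Phi0_fst hcrit).deriv, exp_neg_two_pi_I_mul_three_quarters,
      exp_two_pi_I_mul_three_quarters, exp_two_pi_I_mul_half, sub_neg_eq_add, sub_neg_eq_add, hlog]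
    norm_num
  · rw [(hasDerivAt_Phi0_snd hcrit).deriv, exp_neg_two_pi_I_mul_three_quarters,
      exp_two_pi_I_mul_three_quarters, exp_neg_two_pi_I_mul_quarter, exp_two_pi_I_mul_quarter]
    ring
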